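/- arXiv:1404.0021 — 3 statements merged into one kernel-verified Lean document; each statement's English description precedes it below -/
import Mathlib

section
/- Let P be a finite poset with |P| = m, F a family of posets, and k a positive integer. Then ex*(P^k, F) ≤ n^{log_m(ex*(P,F))} where n = m^k = |P^k|. -/
/-!
An `F`-free subset `S` of `P ×ₗ Q` projects onto an `F`-free set of first coordinates, since
elements with distinct first coordinates are compared by them alone, and each fibre of that
projection is an `F`-free copy of a subset of `Q`. Hence `ex*(P ×ₗ Q, F) ≤ ex*(P, F) ex*(Q, F)`,
and as `P^(k+1) ≅ P ×ₗ P^k`, induction gives `ex*(P^k, F) ≤ x^k` with `x = ex*(P, F)`.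
Finally `x ≤ m` forces `x ≤ m ^ log_m x` (with equality when `x ≥ 1` and `m ≥ 2`), so
`x^k ≤ (m^k) ^ log_m x`.
-/

/-- The lexicographic `k`-th power of a poset `P`: `k`-tuples ordered lexicographically. -/
abbrev LexPow (P : Type*) (k : ℕ) := Lex (Fin k → P)

/-- `exStar P F` : the maximum size of an induced subposet of `P` containing no member of
the family `F` as an induced subposet. -/
noncomputable def exStar (α : Type*) [PartialOrder α] {ι : Type*} (F : ι → Type*)
    [∀ i, PartialOrder (F i)] : ℕ :=
  sSup {n | ∃ S : Finset α,
    (∀ i, ¬ Nonempty (F i ↪o {x // x ∈ S})) ∧ S.card = n}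

open Finset

section LexCons

variable {P : Type*} [PartialOrder P]

instance Pi.Lex.instFintype {ι : Type*} [DecidableEq ι] [Fintype ι] {β : ι → Type*}
    [∀ i, Fintype (β i)] : Fintype (Lex (∀ i, β i)) :=
  inferInstanceAs (Fintype (∀ i, β i))

theorem Pi.toLex_cons_lt_toLex_cons_iff {k : ℕ} {a b : P} {f g : Fin k → P} :
    toLex (Fin.cons a f : Fin (k + 1) → P) < toLex (Fin.cons b g) ↔
      toLex (a, toLex f) < toLex (b, toLex g) := by
  simp only [Prod.Lex.toLex_lt_toLex]
  show Pi.Lex _ _ _ _ ↔ _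
  simp [Pi.Lex, Fin.exists_fin_succ, Fin.forall_fin_succ, Fin.succ_lt_succ_iff, and_assoc]
  rfl

variable (P) in
def Pi.lexConsOrderIso (k : ℕ) : P ×ₗ Lex (Fin k → P) ≃o Lex (Fin (k + 1) → P) :=
  OrderIso.ofRelIsoLT
    { toEquiv := ofLex.trans <| (Equiv.prodCongr (Equiv.refl P) ofLex).trans <|
        (Fin.consEquiv fun _ => P).trans toLex
      map_rel_iff' := by
        rintro ⟨a, f⟩ ⟨b, g⟩
        exact Pi.toLex_cons_lt_toLex_cons_iff }

end LexCons

section Free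

variable {ι : Type*} {F : ι → Type*} [∀ i, PartialOrder (F i)]
variable {α β : Type*} [PartialOrder α] [PartialOrder β]

variable (F) in
def Finset.IsFree (S : Finset α) : Prop := ∀ i, ¬ Nonempty (F i ↪o {x // x ∈ S})

theorem Finset.IsFree.of_orderEmbedding {S : Finset α} {T : Finset β}
    (hS : S.IsFree F) (e : {y // y ∈ T} ↪o {x // x ∈ S}) : T.IsFree F :=
  fun i ⟨g⟩ => hS i ⟨g.trans e⟩

theorem Finset.IsFree.map_orderIso {S : Finset α} (hS : S.IsFree F) (e : α ≃o β) :
    (S.map e.toEquiv.toEmbedding).IsFree F :=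
  hS.of_orderEmbedding <| OrderEmbedding.ofMapLEIff
    (fun y => ⟨e.symm y, mem_map_equiv.mp y.2⟩) fun _ _ => e.symm.le_iff_le

theorem Finset.IsFree.card_le_exStar [Fintype α] {S : Finset α} (hS : S.IsFree F) :
    S.card ≤ exStar α F :=
  le_csSup ⟨Fintype.card α, fun _ ⟨T, _, hT⟩ => hT ▸ T.card_le_univ⟩ ⟨S, hS, rfl⟩

variable (F)

theorem exStar_le {n : ℕ} (h : ∀ S : Finset α, S.IsFree F → S.card ≤ n) : exStar α F ≤ n :=
  csSup_le' fun _ ⟨S, hS, hn⟩ => hn ▸ h S hS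

theorem exStar_le_card [Fintype α] : exStar α F ≤ Fintype.card α :=
  exStar_le F fun S _ => S.card_le_univ

theorem exStar_congr (e : α ≃o β) : exStar α F = exStar β F := by
  unfold exStar
  congr 1
  ext n
  constructor
  · rintro ⟨S, hS, rfl⟩
    exact ⟨_, IsFree.map_orderIso hS e, card_map _⟩
  · rintro ⟨S, hS, rfl⟩
    exact ⟨_, IsFree.map_orderIso hS e.symm, card_map _⟩

end Free

section LexProd

variable {ι : Type*} {F : ι → Type*} [∀ i, PartialOrder (F i)]
variable {α β : Type*} [PartialOrder α] [PartialOrder β]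

theorem Finset.IsFree.image_fst [DecidableEq α] {S : Finset (α ×ₗ β)} (hS : S.IsFree F) :
    (S.image fun x => (ofLex x).1).IsFree F := by
  have hrep (a : {a // a ∈ S.image fun x => (ofLex x).1}) : ∃ x ∈ S, (ofLex x).1 = a :=
    mem_image.mp a.2
  choose r hrS hr using hrep
  refine hS.of_orderEmbedding (OrderEmbedding.ofMapLEIff (fun a => ⟨r a, hrS a⟩) fun a b => ?_)
  rcases eq_or_ne a b with rfl | hab
  · simp
  · simp only [Subtype.mk_le_mk, Prod.Lex.le_iff, hr, Subtype.coe_ne_coe.mpr hab, false_and,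
      or_false]
    exact (Subtype.coe_ne_coe.mpr hab).le_iff_lt.symm

theorem Finset.IsFree.card_fiber_le_exStar [DecidableEq α] [Fintype β] {S : Finset (α ×ₗ β)}
    (hS : S.IsFree F) (a : α) : #{x ∈ S | (ofLex x).1 = a} ≤ exStar β F := by
  classical
  set U : Finset β := {b | toLex (a, b) ∈ S}
  have hU : U.IsFree F := hS.of_orderEmbedding <|
    OrderEmbedding.ofMapLEIff (fun b => ⟨toLex (a, b.1), (mem_filter.mp b.2).2⟩) fun b b' => by
      simp [Prod.Lex.toLex_le_toLex]
  refine (card_le_card_of_injOn (fun x => (ofLex x).2) (fun x hx => ?_) ?_).trans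
    hU.card_le_exStar
  · obtain ⟨hxS, rfl⟩ := mem_filter.mp hx
    simpa [U] using hxS
  · intro x hx y hy hxy
    rw [coe_filter] at hx hy
    exact ofLex.injective (Prod.ext (hx.2.trans hy.2.symm) hxy)

variable (F) in
theorem exStar_lex_prod_le [Fintype α] [Fintype β] :
    exStar (α ×ₗ β) F ≤ exStar α F * exStar β F := by
  classical
  refine exStar_le F fun S hS => ?_
  calc S.card ≤ exStar β F * #(S.image fun x => (ofLex x).1) :=
        card_le_mul_card_image S _ fun a _ => hS.card_fiber_le_exStar a
    _ ≤ exStar β F * exStar α F := Nat.mul_le_mul_left _ hS.image_fst.card_le_exStar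
    _ = exStar α F * exStar β F := mul_comm _ _

end LexProd

theorem exStar_lexPow_le {ι : Type*} (F : ι → Type*) [∀ i, PartialOrder (F i)]
    (P : Type*) [PartialOrder P] [Fintype P] (k : ℕ) :
    exStar (LexPow P k) F ≤ exStar P F ^ k := by
  induction k with
  | zero => exact (exStar_le_card F).trans_eq (by simp)
  | succ k ih =>
    calc exStar (LexPow P (k + 1)) F = exStar (P ×ₗ LexPow P k) F :=
          (exStar_congr F (Pi.lexConsOrderIso P k)).symm
      _ ≤ exStar P F * exStar (LexPow P k) F := exStar_lex_prod_le F
      _ ≤ exStar P F ^ (k + 1) := (Nat.mul_le_mul_left _ ih).trans_eq (pow_succ' _ _).symm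

theorem Nat.cast_le_rpow_logb_of_le {x m : ℕ} (h : x ≤ m) :
    (x : ℝ) ≤ (m : ℝ) ^ Real.logb m x := by
  rcases Nat.eq_zero_or_pos x with rfl | hx
  · simp
  rcases eq_or_ne m 1 with rfl | hm
  · simp [h]
  rw [Real.rpow_logb (by exact_mod_cast hx.trans_le h) (by exact_mod_cast hm) (by positivity)]

theorem lex_power_exStar_bound_general (P : Type*) [PartialOrder P] [Fintype P] {ι : Type*}
    (F : ι → Type*) [∀ i, PartialOrder (F i)] (k : ℕ) :
    (exStar (LexPow P k) F : ℝ) ≤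
      ((Fintype.card P ^ k : ℕ) : ℝ) ^ Real.logb (Fintype.card P) (exStar P F) := by
  set m := Fintype.card P
  have hm : (0 : ℝ) ≤ m := Nat.cast_nonneg m
  calc (exStar (LexPow P k) F : ℝ) ≤ (exStar P F : ℝ) ^ k := by
        exact_mod_cast exStar_lexPow_le F P k
    _ ≤ ((m : ℝ) ^ Real.logb m (exStar P F)) ^ k :=
        pow_le_pow_left₀ (Nat.cast_nonneg _) (Nat.cast_le_rpow_logb_of_le (exStar_le_card F)) k
    _ = ((m ^ k : ℕ) : ℝ) ^ Real.logb m (exStar P F) := by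
        rw [← Real.rpow_mul_natCast hm, mul_comm, Real.rpow_natCast_mul hm, Nat.cast_pow]

/-- Theorem 2.1: `ex*(P^k, F) ≤ n ^ (log_m (ex*(P,F)))` where `m = |P|` and `n = m^k`. -/
theorem lex_power_exStar_bound (P : Type*) [PartialOrder P] [Fintype P] {ι : Type*}
    (F : ι → Type*) [∀ i, PartialOrder (F i)] (k : ℕ) (hk : 0 < k) :
    (exStar (LexPow P k) F : ℝ) ≤
      ((Fintype.card P ^ k : ℕ) : ℝ) ^ Real.logb (Fintype.card P) (exStar P F) :=
  lex_power_exStar_bound_general P F k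
end

section
/- The maximum size of an induced subposet of the standard example S_m (m ≥ 3) that has order dimension at most 2 is m + 2. -/
/-- A poset has order dimension at most `d`: there are `d` linear extensions
whose intersection is the order relation. -/
def dimLE (α : Type*) [PartialOrder α] (d : ℕ) : Prop :=
  ∃ L : Fin d → LinearOrder α,
    (∀ i, ∀ x y : α, x ≤ y → (L i).le x y) ∧
    (∀ x y : α, (∀ i, (L i).le x y) → x ≤ y)

/-- The standard example `S_m`: `inl i = a_i`, `inr j = b_j`, with `a_i < b_j` iff `i ≠ j`,
and no other strict relations. -/
def StdEx (m : ℕ) := Fin m ⊕ Fin m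

instance (m : ℕ) : PartialOrder (StdEx m) where
  le x y := x = y ∨ ∃ i j, x = Sum.inl i ∧ y = Sum.inr j ∧ i ≠ j
  le_refl x := Or.inl rfl
  le_trans := by
    rintro x y z (rfl | ⟨i, j, rfl, rfl, hij⟩) (rfl | ⟨i', j', h1, rfl, hij'⟩)
    · exact Or.inl rfl
    · exact Or.inr ⟨i', j', h1, rfl, hij'⟩
    · exact Or.inr ⟨i, j, rfl, rfl, hij⟩
    · exact absurd h1 (by simp)
  le_antisymm := by
    rintro x y (rfl | ⟨i, j, rfl, rfl, hij⟩) (h | ⟨i', j', h1, h2, hij'⟩)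
    · rfl
    · rfl
    · exact absurd h (by simp)
    · exact absurd h1 (by simp)

instance (m : ℕ) : Fintype (StdEx m) := instFintypeSum _ _

open Finset Function

theorem dimLE_of_ranks {α β : Type*} [PartialOrder α] [LinearOrder β] {d : ℕ}
    (f : Fin d → α → β) (hinj : ∀ i, Injective (f i)) (hmono : ∀ i, Monotone (f i))
    (hreflect : ∀ x y, (∀ i, f i x ≤ f i y) → x ≤ y) : dimLE α d :=
  ⟨fun i => LinearOrder.lift' (f i) (hinj i), fun i _ _ h => hmono i h, hreflect⟩

/- Each pair `(x k, y k)` is reversed by some extension of the realizer, and no extension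
reverses two of them: `y k < x k`, `y l < x l` together with `x k ≤ y l`, `x l ≤ y k` would give
`x k ≤ y k`. -/
theorem card_le_of_dimLE {α ι : Type*} [PartialOrder α] [Fintype ι] {d : ℕ}
    (hd : dimLE α d) (x y : ι → α) (hxy : ∀ k, ¬ x k ≤ y k)
    (hcross : ∀ k l, k ≠ l → x k ≤ y l) : Fintype.card ι ≤ d := by
  obtain ⟨L, hext, hreflect⟩ := hd
  have hrev : ∀ k, ∃ i, ¬ (L i).le (x k) (y k) := fun k => by
    by_contra! h
    exact hxy k (hreflect _ _ h)
  choose e he using hrev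
  suffices Injective e by simpa using Fintype.card_le_of_injective e this
  intro k l hkl
  by_contra hne
  have hl : (L (e k)).le (y l) (x l) := ((L (e k)).le_total _ _).resolve_left (hkl ▸ he l)
  exact he k <| (L (e k)).le_trans _ _ _ (hext _ _ _ (hcross k l hne)) <|
    (L (e k)).le_trans _ _ _ hl (hext _ _ _ (hcross l k (Ne.symm hne)))

namespace StdEx

variable {m : ℕ}

def a (i : Fin m) : StdEx m := Sum.inl i

def b (j : Fin m) : StdEx m := Sum.inr j

lemma le_def {x y : StdEx m} :
    x ≤ y ↔ x = y ∨ ∃ i j, x = a i ∧ y = b j ∧ i ≠ j := Iff.rfl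

lemma a_le_b_iff {i j : Fin m} : a i ≤ b j ↔ i ≠ j := by
  refine ⟨?_, fun h => Or.inr ⟨i, j, rfl, rfl, h⟩⟩
  rintro (h | ⟨i', j', hi, hj, hne⟩)
  · exact absurd h Sum.inl_ne_inr
  · rwa [Sum.inl_injective hi, Sum.inr_injective hj]

theorem card_le_of_dimLE {d : ℕ} (S : Finset (StdEx m)) (hS : dimLE S d) :
    #S ≤ m + d := by
  set T := S.toLeft ∩ S.toRight
  have hmem : ∀ k : T, a k.1 ∈ S ∧ b k.1 ∈ S := fun k =>
    ⟨mem_toLeft.1 (mem_inter.1 k.2).1, mem_toRight.1 (mem_inter.1 k.2).2⟩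
  have hT : #T ≤ d := by
    simpa using _root_.card_le_of_dimLE hS (ι := T)
      (fun k => ⟨a k.1, (hmem k).1⟩) (fun k => ⟨b k.1, (hmem k).2⟩)
      (fun k => by simp [Subtype.mk_le_mk, a_le_b_iff])
      (fun k l hkl => Subtype.mk_le_mk.2 (a_le_b_iff.2 (Subtype.coe_ne_coe.2 hkl)))
  calc #S = #S.toLeft + #S.toRight := card_toLeft_add_card_toRight.symm
    _ = #(S.toLeft ∪ S.toRight) + #T := (card_union_add_card_inter _ _).symm
    _ ≤ m + d := add_le_add (by simpa using card_le_univ (S.toLeft ∪ S.toRight)) hT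

def minimalsAndTwoMaximals (m : ℕ) : Finset (StdEx m) :=
  univ.disjSum {j : Fin m | (j : ℕ) < 2}

lemma card_minimalsAndTwoMaximals (hm : 2 ≤ m) : #(minimalsAndTwoMaximals m) = m + 2 :=
  (card_disjSum _ _).trans <| by
    rw [card_univ, Fintype.card_fin, Fin.card_filter_val_lt, min_eq_right hm]

lemma lt_two_of_b_mem {j : Fin m} (h : b j ∈ minimalsAndTwoMaximals m) : (j : ℕ) < 2 := by
  simpa using inr_mem_disjSum.1 h

/- The two linear extensions of `S_m` realizing the subposet:
`a_1 < ⋯ < a_{m-1} < b_0 < a_0 < b_1 < ⋯ < b_{m-1}` reverses the pair `(a_0, b_0)`, and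
`a_0 < a_{m-1} < ⋯ < a_2 < b_1 < a_1 < b_0 < b_2 < ⋯ < b_{m-1}` reverses `(a_1, b_1)`. -/

def rank₁ : StdEx m → ℕ
  | Sum.inl i => if (i : ℕ) = 0 then m + 1 else i
  | Sum.inr j => if (j : ℕ) = 0 then m else m + 1 + j

def rank₂ : StdEx m → ℕ
  | Sum.inl i => if (i : ℕ) = 0 then 0 else 2 * (m - i)
  | Sum.inr j => if (j : ℕ) = 1 then 2 * m - 3 else 2 * m + 1 + j

lemma rank₁_injective : Injective (rank₁ : StdEx m → ℕ) := by
  rintro (i | i) (j | j) h <;> have := i.is_lt <;> have := j.is_lt <;> simp only [rank₁] at h <;>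
    split_ifs at h <;> first | (exfalso; omega) | exact congrArg _ (Fin.ext (by omega))

lemma rank₂_injective : Injective (rank₂ : StdEx m → ℕ) := by
  rintro (i | i) (j | j) h <;> have := i.is_lt <;> have := j.is_lt <;> simp only [rank₂] at h <;>
    split_ifs at h <;> first | (exfalso; omega) | exact congrArg _ (Fin.ext (by omega))

lemma rank₁_monotone : Monotone (rank₁ : StdEx m → ℕ) := by
  rintro x y (rfl | ⟨i, j, rfl, rfl, hij⟩)
  · exact le_rfl
  · have := i.is_lt
    have := Fin.val_ne_of_ne hij
    simp only [rank₁]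
    split_ifs <;> omega

lemma rank₂_monotone : Monotone (rank₂ : StdEx m → ℕ) := by
  rintro x y (rfl | ⟨i, j, rfl, rfl, hij⟩)
  · exact le_rfl
  · have := i.is_lt
    have := j.is_lt
    have := Fin.val_ne_of_ne hij
    simp only [rank₂]
    split_ifs <;> omega

lemma le_of_rank_le {x y : StdEx m} (hx : x ∈ minimalsAndTwoMaximals m)
    (hy : y ∈ minimalsAndTwoMaximals m) (h₁ : rank₁ x ≤ rank₁ y) (h₂ : rank₂ x ≤ rank₂ y) :
    x ≤ y := by
  rcases x with i | i <;> rcases y with j | j <;> have := i.is_lt <;> have := j.is_lt <;>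
    simp only [rank₁, rank₂] at h₁ h₂
  · exact Or.inl (congrArg _ (Fin.ext (by split_ifs at h₁ h₂ <;> omega)))
  · refine Or.inr ⟨i, j, rfl, rfl, fun hij => ?_⟩
    subst hij
    have := lt_two_of_b_mem hy
    split_ifs at h₁ h₂ <;> omega
  · have := lt_two_of_b_mem hx
    split_ifs at h₁ h₂ <;> omega
  · have := lt_two_of_b_mem hx
    have := lt_two_of_b_mem hy
    exact Or.inl (congrArg _ (Fin.ext (by split_ifs at h₁ h₂ <;> omega)))

theorem dimLE_minimalsAndTwoMaximals : dimLE (minimalsAndTwoMaximals m) 2 :=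
  dimLE_of_ranks ![rank₁ ∘ Subtype.val, rank₂ ∘ Subtype.val]
    (Fin.forall_fin_two.2 ⟨rank₁_injective.comp Subtype.val_injective,
      rank₂_injective.comp Subtype.val_injective⟩)
    (Fin.forall_fin_two.2 ⟨rank₁_monotone.comp (Subtype.mono_coe _),
      rank₂_monotone.comp (Subtype.mono_coe _)⟩)
    (fun x y h => le_of_rank_le x.2 y.2 (h 0) (h 1))

end StdEx

/-- The maximum size of an induced subposet of `S_m` (`m ≥ 3`) of order dimension
at most 2 is `m + 2`. -/
theorem stdEx_dim2_subposet (m : ℕ) (hm : 3 ≤ m) :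
    IsGreatest {n | ∃ S : Finset (StdEx m), dimLE {x // x ∈ S} 2 ∧ S.card = n} (m + 2) :=
  ⟨⟨_, StdEx.dimLE_minimalsAndTwoMaximals, StdEx.card_minimalsAndTwoMaximals (by omega)⟩,
    fun _ ⟨S, hS, hcard⟩ => hcard ▸ StdEx.card_le_of_dimLE S hS⟩
end

section
/- For n a power of 20, the lexicographic power S_10^k of the standard example S_10 (where n = 20^k) has the property that every induced subposet of order dimension at most 2 has size at most n^{log_20 12}, and log_20 12 < 0.8295. -/
/-!
If a subposet `S` of a lexicographic product `P ×ₗ Q` has dimension at most `d`, then so does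
the set of first coordinates of `S` (choosing one element of `S` over each of them gives an
isomorphic copy inside `S`) and so does each fibre of `S`, viewed in `Q`. Hence the largest such
subposets have sizes bounded multiplicatively, and induction on `k` bounds those of `S_10^k` by
`12^k`, which is `n ^ log_20 12` for `n = 20^k`.

For `S_m` the bound is `m + 2`: a subposet of dimension at most 2 contains both `a_i` and `b_i`
for at most two indices `i`, since `S_3` has dimension 3. Indeed, a realizer must reverse each
pair `a_i ∥ b_i`, and if one linear extension reverses two of them, say for `i ≠ j`, then in it
`a_i < b_j < a_j < b_i`.
-/

namespace dimLE

variable {α β : Type*} [PartialOrder α] [PartialOrder β] {d : ℕ}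

theorem of_orderEmbedding (f : α ↪o β) (h : dimLE β d) : dimLE α d := by
  obtain ⟨L, hext, hinter⟩ := h
  exact ⟨fun i => @LinearOrder.lift' α β (L i) f f.injective,
    fun i x y hxy => hext i (f x) (f y) (f.le_iff_le.2 hxy),
    fun x y hxy => f.le_iff_le.1 (hinter (f x) (f y) hxy)⟩

theorem of_orderEmbedding_mapsTo (f : α ↪o β) {T : Finset β} (hf : ∀ x, f x ∈ T)
    (h : dimLE T d) : dimLE α d :=
  h.of_orderEmbedding (.ofMapLEIff (fun x => ⟨f x, hf x⟩) fun _ _ => f.le_iff_le)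

theorem image_of_monotone [DecidableEq β] {f : α → β} (hf : Monotone f)
    (hf_lt : ∀ x y, f x < f y → x < y) {S : Finset α} (h : dimLE S d) :
    dimLE (S.image f) d := by
  have hsec : ∀ y : S.image f, ∃ x : S, f x = y := fun y => by
    obtain ⟨x, hx, hxy⟩ := Finset.mem_image.1 y.2
    exact ⟨⟨x, hx⟩, hxy⟩
  choose s hs using hsec
  refine h.of_orderEmbedding (.ofMapLEIff s fun y y' => ⟨fun hle => ?_, fun hle => ?_⟩)
  · simpa only [← Subtype.coe_le_coe, ← hs] using hf hle
  · rcases hle.lt_or_eq with hlt | rfl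
    · exact (hf_lt _ _ (by rw [hs, hs]; exact hlt)).le
    · exact le_rfl

end dimLE

def Prod.Lex.fiberEmbedding {α β : Type*} [PartialOrder α] [PartialOrder β] (a : α) :
    β ↪o α ×ₗ β :=
  .ofMapLEIff (fun b => toLex (a, b)) fun _ _ => by simp [Prod.Lex.toLex_le_toLex]

def LexPow.consOrderIso (P : Type*) [PartialOrder P] (k : ℕ) :
    P ×ₗ LexPow P k ≃o LexPow P (k + 1) where
  toEquiv := ofLex.trans <| (Equiv.prodCongr (.refl P) ofLex).trans <|
    (Fin.consEquiv fun _ => P).trans toLex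
  map_rel_iff' := by
    rintro ⟨p, x⟩ ⟨q, y⟩
    change toLex (Fin.cons p (ofLex x) : Fin (k + 1) → P) ≤ toLex (Fin.cons q (ofLex y)) ↔
      toLex (p, x) ≤ toLex (q, y)
    have hlt : toLex (Fin.cons p (ofLex x) : Fin (k + 1) → P) < toLex (Fin.cons q (ofLex y)) ↔
        p < q ∨ p = q ∧ x < y :=
      Fin.pi_lex_lt_cons_cons _
    rw [le_iff_lt_or_eq, le_iff_lt_or_eq, Prod.Lex.toLex_lt_toLex]
    exact or_congr hlt (by simp [Fin.cons_inj])

/-- `ex*(α, D_{d+1}) ≤ c` in the notation of the paper. -/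
def DimSubposetBound (α : Type*) [PartialOrder α] (d c : ℕ) : Prop :=
  ∀ S : Finset α, dimLE S d → S.card ≤ c

namespace DimSubposetBound

variable {α β : Type*} [PartialOrder α] [PartialOrder β] {d a b : ℕ}

theorem of_orderIso (e : α ≃o β) (h : DimSubposetBound β d a) : DimSubposetBound α d a := by
  intro S hS
  rw [← S.card_map e.toEquiv.toEmbedding]
  refine h _ (hS.of_orderEmbedding_mapsTo
    ((OrderEmbedding.subtype _).trans e.symm.toOrderEmbedding) fun x => ?_)
  obtain ⟨y, hy, hxy⟩ := Finset.mem_map.1 x.2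
  simpa [← hxy] using hy

theorem prodLex (hα : DimSubposetBound α d a) (hβ : DimSubposetBound β d b) :
    DimSubposetBound (α ×ₗ β) d (a * b) := by
  classical
  intro S hS
  set T := S.image fun x => (ofLex x).1
  have hT : T.card ≤ a := hα T <| hS.image_of_monotone Prod.Lex.monotone_fst_ofLex
    fun _ _ h => Prod.Lex.lt_iff.2 (.inl h)
  have hfiber : ∀ p ∈ T, (S.filter fun x => (ofLex x).1 = p).card ≤ b := by
    intro p _
    set F := S.filter fun x => (ofLex x).1 = p
    have hinj : Set.InjOn (fun x : α ×ₗ β => (ofLex x).2) F := by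
      intro x hx y hy hxy
      simp only [F, Finset.coe_filter, Set.mem_ofPred_eq] at hx hy
      exact ofLex.injective (Prod.ext (hx.2.trans hy.2.symm) hxy)
    rw [← Finset.card_image_of_injOn hinj]
    refine hβ _ (hS.of_orderEmbedding_mapsTo
      ((OrderEmbedding.subtype _).trans (Prod.Lex.fiberEmbedding p)) ?_)
    rintro ⟨q, hq⟩
    obtain ⟨x, hx, rfl⟩ := Finset.mem_image.1 hq
    simp only [F, Finset.mem_filter] at hx
    simpa [Prod.Lex.fiberEmbedding, ← hx.2] using hx.1
  calc S.card = ∑ p ∈ T, (S.filter fun x => (ofLex x).1 = p).card :=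
        Finset.card_eq_sum_card_image _ _
    _ ≤ ∑ _p ∈ T, b := Finset.sum_le_sum hfiber
    _ = T.card * b := by rw [Finset.sum_const, smul_eq_mul]
    _ ≤ a * b := Nat.mul_le_mul_right _ hT

theorem lexPow {P : Type*} [PartialOrder P] {c : ℕ} (h : DimSubposetBound P d c) (k : ℕ) :
    DimSubposetBound (LexPow P k) d (c ^ k) := by
  induction k with
  | zero => exact fun S _ => by simpa using Finset.card_le_one_of_subsingleton S
  | succ k ih =>
    rw [pow_succ']
    exact (h.prodLex ih).of_orderIso (LexPow.consOrderIso P k).symm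

end DimSubposetBound

namespace StdEx

variable {c m : ℕ}

theorem le_iff {x y : StdEx m} :
    x ≤ y ↔ x = y ∨ ∃ i j, x = Sum.inl i ∧ y = Sum.inr j ∧ i ≠ j := Iff.rfl

def map (e : Fin c → Fin m) : StdEx c → StdEx m := Sum.map e e

def embedding (e : Fin c ↪ Fin m) : StdEx c ↪o StdEx m :=
  .ofMapLEIff (map e) fun x y => by
    refine le_iff.trans (Iff.trans ?_ le_iff.symm)
    rcases x with i | i <;> rcases y with j | j <;> simp [StdEx, map, e.injective.eq_iff]

theorem not_dimLE_two (hm : 2 < m) : ¬ dimLE (StdEx m) 2 := by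
  rintro ⟨L, hext, hinter⟩
  have hrev : ∀ i : Fin m, ∃ t, ¬ (L t).le (Sum.inl i : StdEx m) (Sum.inr i) := by
    intro i
    by_contra! h
    obtain h | ⟨a, b, ha, hb, hab⟩ := le_iff.1 (hinter _ _ h)
    · exact Sum.inl_ne_inr h
    · exact hab (Sum.inl_injective ha ▸ Sum.inr_injective hb ▸ rfl)
  choose t ht using hrev
  obtain ⟨i, j, hij, htij⟩ := Fintype.exists_ne_map_eq_of_card_lt t (by simpa using hm)
  let l := L (t i)
  have hab : ∀ {i' j'}, i' ≠ j' → l.le (Sum.inl i' : StdEx m) (Sum.inr j') :=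
    fun h => hext _ _ _ (le_iff.2 (.inr ⟨_, _, rfl, rfl, h⟩))
  have hba : l.le (Sum.inr j : StdEx m) (Sum.inl j) := by
    rw [show l = L (t j) from congrArg L htij]
    exact ((L (t j)).le_total _ _).resolve_left (ht j)
  exact ht i (l.le_trans _ _ _ (hab hij) (l.le_trans _ _ _ hba (hab hij.symm)))

end StdEx

theorem dimSubposetBound_stdEx (m : ℕ) : DimSubposetBound (StdEx m) 2 (m + 2) := by
  classical
  intro S hS
  set C := S.toLeft ∩ S.toRight
  have hC : C.card ≤ 2 := by
    by_contra! h
    refine StdEx.not_dimLE_two h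
      (hS.of_orderEmbedding_mapsTo (StdEx.embedding (C.orderEmbOfFin rfl).toEmbedding) ?_)
    have hmem := C.orderEmbOfFin_mem rfl
    rintro (i | i)
    · exact Finset.mem_toLeft.1 (Finset.mem_inter.1 (hmem i)).1
    · exact Finset.mem_toRight.1 (Finset.mem_inter.1 (hmem i)).2
  calc S.card = S.toLeft.card + S.toRight.card := Finset.card_toLeft_add_card_toRight.symm
    _ = (S.toLeft ∪ S.toRight).card + C.card := (Finset.card_union_add_card_inter _ _).symm
    _ ≤ m + 2 := add_le_add ((Finset.card_le_univ _).trans_eq (Fintype.card_fin m)) hC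

theorem Real.pow_rpow_logb {b x : ℝ} (hb : 0 < b) (hb1 : b ≠ 1) (hx : 0 < x) (k : ℕ) :
    (b ^ k) ^ Real.logb b x = x ^ k := by
  rw [← Real.rpow_natCast, ← Real.rpow_mul hb.le, mul_comm, Real.rpow_mul hb.le,
    Real.rpow_logb hb hb1 hx, Real.rpow_natCast]

theorem logb_twenty_twelve_lt : Real.logb 20 12 < 0.8295 := by
  -- `log_20 12 = 0.82948…`; `180 / 217` lies in between and has small enough exponents to evaluate.
  have h : Real.log ((12 : ℝ) ^ 217) < Real.log ((20 : ℝ) ^ 180) :=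
    Real.log_lt_log (by positivity) (by norm_num)
  have h20 : 0 < Real.log 20 := Real.log_pos (by norm_num)
  rw [Real.log_pow, Real.log_pow] at h
  rw [Real.logb, div_lt_iff₀ h20]
  push_cast at h
  linarith

/-- For `n = 20^k`, every induced subposet of `S_10^k` of order dimension at most 2 has
size at most `n ^ (log_20 12)`, and `log_20 12 < 0.8295`. -/
theorem lexPow_stdEx_ten (k : ℕ) :
    (∀ S : Finset (LexPow (StdEx 10) k), dimLE {x // x ∈ S} 2 →
      (S.card : ℝ) ≤ ((20 ^ k : ℕ) : ℝ) ^ Real.logb 20 12) ∧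
    Real.logb 20 12 < 0.8295 := by
  refine ⟨fun S hS => ?_, logb_twenty_twelve_lt⟩
  rw [Nat.cast_pow, Nat.cast_ofNat, Real.pow_rpow_logb (by norm_num) (by norm_num) (by norm_num)]
  exact_mod_cast (dimSubposetBound_stdEx 10).lexPow k S hS
end
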